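/- Let K be a number field and let I be a nonzero integral ideal of O_K. For every complex s with Re(s) > 1, the Dirichlet series of the Ramanujan sums in the modulus satisfies ∑_{J ⊆ O_K, J ≠ 0} C_J(I) / N(J)^s = σ_{K,1-s}(I) / ζ_K(s), where σ_{K,1-s}(I) = ∑_{I₁ | I} N(I₁)^{1-s} and the sum over J runs over all nonzero integral ideals of O_K. -/
import Mathlib


open scoped BigOperators
open NumberField Filter

noncomputable section

open scoped Classical in
/-- The generalized Möbius function on integral ideals of a number field:
`μ(I) = (-1)^r` if `I` is a product of `r` distinct prime ideals and `0` otherwise. -/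
def idealMoebius (K : Type*) [Field K] [NumberField K] (I : Ideal (𝓞 K)) : ℤ :=
  if Squarefree I then (-1) ^ (UniqueFactorizationMonoid.factors I).card else 0

/-- The Ramanujan sum over a number field:
`C_J(I) = ∑_{I₁ ∣ J, I₁ ∣ I} N(I₁) μ(J/I₁)`. -/
def ramanujanSum (K : Type*) [Field K] [NumberField K] (J I : Ideal (𝓞 K)) : ℤ :=
  ∑ᶠ (d : Ideal (𝓞 K)) (e : Ideal (𝓞 K)) (_ : d * e = J) (_ : d ∣ I),
    (Ideal.absNorm d : ℤ) * idealMoebius K e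

/-- The generalized divisor function `σ_{K,z}(I) = ∑_{I₁ ∣ I} N(I₁)^z`. -/
def sigmaK (K : Type*) [Field K] [NumberField K] (z : ℂ) (I : Ideal (𝓞 K)) : ℂ :=
  ∑ᶠ (d : Ideal (𝓞 K)) (_ : d ∣ I), (Ideal.absNorm d : ℂ) ^ z

/-- `Z` is the Dedekind zeta function of `K`: it is analytic away from `s = 1` and agrees with
the Dirichlet series `∑_I N(I)^{-s}` on `Re s > 1`. -/
def IsDedekindZeta (K : Type*) [Field K] [NumberField K] (Z : ℂ → ℂ) : Prop :=
  (∀ s : ℂ, s ≠ 1 → DifferentiableAt ℂ Z s) ∧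
  ∀ s : ℂ, 1 < s.re →
    HasSum (fun I : {I : Ideal (𝓞 K) // I ≠ 0} =>
      (Ideal.absNorm I.1 : ℂ) ^ (-s)) (Z s)

/-- The Generalized Lindelöf Hypothesis for `Z`: `|Z(1/2 + it)| ≪_ε |t|^ε`. -/
def GLH (Z : ℂ → ℂ) : Prop :=
  ∀ ε > 0, ∃ C > 0, ∀ t : ℝ, 1 ≤ |t| →
    ‖Z (1 / 2 + t * Complex.I)‖ ≤ C * |t| ^ ε

/-! ### Auxiliary material -/

section Aux

open UniqueFactorizationMonoid
open scoped Classical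

variable {K : Type*} [Field K] [NumberField K]

/-- The finset of divisors of a (nonzero) ideal. -/
noncomputable def idealDivisors (J : Ideal (𝓞 K)) : Finset (Ideal (𝓞 K)) :=
  if h : J = 0 then ∅ else
    @Set.Finite.toFinset _ {d | d ∣ J}
      (@Set.toFinite _ _ (@Finite.of_fintype _
        (UniqueFactorizationMonoid.fintypeSubtypeDvd J h)))

lemma mem_idealDivisors {J d : Ideal (𝓞 K)} (hJ : J ≠ 0) :
    d ∈ idealDivisors J ↔ d ∣ J := by
  rw [idealDivisors, dif_neg hJ, Set.Finite.mem_toFinset]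
  rfl

lemma ne_zero_of_mem_idealDivisors {J d : Ideal (𝓞 K)} (hJ : J ≠ 0)
    (hd : d ∈ idealDivisors J) : d ≠ 0 := by
  rw [mem_idealDivisors hJ] at hd
  rintro rfl
  exact hJ (zero_dvd_iff.mp hd)

lemma idealMoebius_one : idealMoebius K 1 = 1 := by
  rw [idealMoebius, if_pos squarefree_one, UniqueFactorizationMonoid.factors_one]
  simp

lemma idealMoebius_of_not_squarefree {e : Ideal (𝓞 K)} (h : ¬ Squarefree e) :
    idealMoebius K e = 0 := by
  rw [idealMoebius, if_neg h]

lemma abs_idealMoebius_le_one (e : Ideal (𝓞 K)) : |idealMoebius K e| ≤ 1 := by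
  rw [idealMoebius]
  split_ifs
  · rw [abs_pow, abs_neg, abs_one, one_pow]
  · simp

lemma factors_card_eq (e : Ideal (𝓞 K)) :
    (UniqueFactorizationMonoid.factors e).card = (normalizedFactors e).card := by
  rw [factors_eq_normalizedFactors]

lemma squarefree_prime_mul {p e : Ideal (𝓞 K)} (hp : Prime p) (hpe : ¬ p ∣ e)
    (he : Squarefree e) : Squarefree (p * e) := by
  have he0 : e ≠ 0 := he.ne_zero
  rw [squarefree_iff_nodup_normalizedFactors (mul_ne_zero hp.ne_zero he0),
    normalizedFactors_mul hp.ne_zero he0, normalizedFactors_irreducible hp.irreducible,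
    normalize_eq, Multiset.singleton_add, Multiset.nodup_cons]
  refine ⟨fun hmem => hpe (dvd_of_mem_normalizedFactors hmem), ?_⟩
  rwa [← squarefree_iff_nodup_normalizedFactors he0]

lemma idealMoebius_prime_mul {p e : Ideal (𝓞 K)} (hp : Prime p) (hpe : ¬ p ∣ e)
    (he0 : e ≠ 0) : idealMoebius K (p * e) = - idealMoebius K e := by
  by_cases he : Squarefree e
  · have hpe' : Squarefree (p * e) := squarefree_prime_mul hp hpe he
    rw [idealMoebius, idealMoebius, if_pos he, if_pos hpe', factors_card_eq, factors_card_eq,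
      normalizedFactors_mul hp.ne_zero he0, Multiset.card_add,
      normalizedFactors_irreducible hp.irreducible, Multiset.card_singleton]
    ring
  · have : ¬ Squarefree (p * e) := fun h => he (h.squarefree_of_dvd (dvd_mul_left e p))
    rw [idealMoebius_of_not_squarefree this, idealMoebius_of_not_squarefree he, neg_zero]

lemma idealMoebius_prod_primes (T : Finset (Ideal (𝓞 K))) (hT : ∀ p ∈ T, Prime p) :
    Squarefree (∏ p ∈ T, p) ∧ idealMoebius K (∏ p ∈ T, p) = (-1) ^ T.card := by
  classical
  induction T using Finset.induction with
  | empty =>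
    rw [Finset.prod_empty, Finset.card_empty, pow_zero]
    exact ⟨squarefree_one, idealMoebius_one⟩
  | @insert a T ha ih =>
    have hTp : ∀ p ∈ T, Prime p := fun p hpT => hT p (Finset.mem_insert_of_mem hpT)
    have hap : Prime a := hT a (Finset.mem_insert_self a T)
    obtain ⟨hsq, hmu⟩ := ih hTp
    have hadvd : ¬ a ∣ ∏ p ∈ T, p := by
      intro hdvd
      obtain ⟨q, hqT, haq⟩ := hap.exists_mem_finset_dvd hdvd
      have : a = q := associated_iff_eq.mp
        (hap.irreducible.associated_of_dvd (hTp q hqT).irreducible haq)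
      exact ha (this ▸ hqT)
    rw [Finset.prod_insert ha]
    refine ⟨squarefree_prime_mul hap hadvd hsq, ?_⟩
    rw [idealMoebius_prime_mul hap hadvd hsq.ne_zero, hmu,
      Finset.card_insert_of_notMem ha, pow_succ]
    ring

lemma sum_idealMoebius_divisors {J : Ideal (𝓞 K)} (hJ : J ≠ 0) :
    ∑ e ∈ idealDivisors J, idealMoebius K e = if J = 1 then 1 else 0 := by
  classical
  set P : Finset (Ideal (𝓞 K)) := (normalizedFactors J).toFinset with hP
  have hPprime : ∀ p ∈ P, Prime p := fun p hp =>
    prime_of_normalized_factor p (Multiset.mem_toFinset.mp hp)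
  have hJbot : J ≠ ⊥ := by rwa [← Ideal.zero_eq_bot]
  have hprodJ : (normalizedFactors J).prod = J := prod_normalizedFactors_eq_self hJbot
  have hsum1 : ∑ e ∈ (idealDivisors J).filter (fun e => Squarefree e), idealMoebius K e
      = ∑ e ∈ idealDivisors J, idealMoebius K e := by
    apply Finset.sum_filter_of_ne
    intro e _ hne
    by_contra h
    exact hne (idealMoebius_of_not_squarefree h)
  have hsum2 : ∑ T ∈ P.powerset, ((-1 : ℤ)) ^ T.card
      = ∑ e ∈ (idealDivisors J).filter (fun e => Squarefree e), idealMoebius K e := by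
    refine Finset.sum_bij' (fun T _ => ∏ p ∈ T, p)
      (fun e _ => (normalizedFactors e).toFinset) ?_ ?_ ?_ ?_ ?_
    · -- maps into squarefree divisors
      intro T hT
      rw [Finset.mem_powerset] at hT
      have hTprime : ∀ p ∈ T, Prime p := fun p hp => hPprime p (hT hp)
      obtain ⟨hsq, _⟩ := idealMoebius_prod_primes T hTprime
      rw [Finset.mem_filter, mem_idealDivisors hJ]
      refine ⟨?_, hsq⟩
      have hle : T.val ≤ normalizedFactors J := by
        rw [Multiset.le_iff_count]
        intro p
        by_cases hpT : p ∈ T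
        · have h1 : T.val.count p = 1 := Multiset.count_eq_one_of_mem T.nodup hpT
          have h2 : 0 < (normalizedFactors J).count p :=
            Multiset.count_pos.mpr (Multiset.mem_toFinset.mp (hT hpT))
          omega
        · have h1 : T.val.count p = 0 := Multiset.count_eq_zero.mpr hpT
          omega
      calc (∏ p ∈ T, p) = T.val.prod := by
            rw [Finset.prod_eq_multiset_prod, Multiset.map_id']
        _ ∣ (normalizedFactors J).prod := Multiset.prod_dvd_prod_of_le hle
        _ = J := hprodJ
    · -- inverse map lands in powerset
      intro e he
      rw [Finset.mem_filter, mem_idealDivisors hJ] at he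
      obtain ⟨hdvd, hsq⟩ := he
      have he0 : e ≠ 0 := hsq.ne_zero
      rw [Finset.mem_powerset, hP]
      intro p hp
      rw [Multiset.mem_toFinset] at hp ⊢
      exact Multiset.subset_of_le
        ((dvd_iff_normalizedFactors_le_normalizedFactors he0 hJ).mp hdvd) hp
    · -- left inverse
      intro T hT
      rw [Finset.mem_powerset] at hT
      have hTprime : ∀ p ∈ T, Prime p := fun p hp => hPprime p (hT hp)
      have hnf : normalizedFactors (∏ p ∈ T, p) = T.val := by
        rw [Finset.prod_eq_multiset_prod, Multiset.map_id',
          normalizedFactors_prod_eq _ (fun a ha => (hTprime a ha).irreducible),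
          Multiset.map_congr rfl (fun a _ => normalize_eq a), Multiset.map_id']
      show (normalizedFactors (∏ p ∈ T, p)).toFinset = T
      rw [hnf, Finset.val_toFinset]
    · -- right inverse
      intro e he
      rw [Finset.mem_filter, mem_idealDivisors hJ] at he
      obtain ⟨hdvd, hsq⟩ := he
      have he0 : e ≠ 0 := hsq.ne_zero
      have he0' : e ≠ ⊥ := by rwa [← Ideal.zero_eq_bot]
      have hnodup : (normalizedFactors e).Nodup :=
        (squarefree_iff_nodup_normalizedFactors he0).mp hsq
      calc (∏ p ∈ (normalizedFactors e).toFinset, p)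
          = (normalizedFactors e).toFinset.val.prod := by
            rw [Finset.prod_eq_multiset_prod, Multiset.map_id']
        _ = (normalizedFactors e).prod := by
            rw [Multiset.toFinset_val, Multiset.dedup_eq_self.mpr hnodup]
        _ = e := prod_normalizedFactors_eq_self he0'
    · -- value equality
      intro T hT
      rw [Finset.mem_powerset] at hT
      exact ((idealMoebius_prod_primes T (fun p hp => hPprime p (hT hp))).2).symm
  have hiff : P = ∅ ↔ J = 1 := by
    rw [hP, Multiset.toFinset_eq_empty]
    constructor
    · intro h
      rw [← hprodJ, h, Multiset.prod_zero]
    · rintro rfl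
      exact normalizedFactors_one
  rw [← hsum1, ← hsum2, Finset.sum_powerset_neg_one_pow_card, if_congr hiff rfl rfl]

/-- The unique complementary divisor: if `d ∣ J` with `d ≠ 0`, then `d * coDiv J d = J`. -/
noncomputable def coDiv (J d : Ideal (𝓞 K)) : Ideal (𝓞 K) :=
  if h : d ∣ J then h.choose else 1

lemma coDiv_spec {J d : Ideal (𝓞 K)} (h : d ∣ J) : d * coDiv J d = J := by
  rw [coDiv, dif_pos h]
  exact h.choose_spec.symm

lemma coDiv_eq {J d e : Ideal (𝓞 K)} (hd : d ≠ 0) (h : d * e = J) : coDiv J d = e := by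
  have hdvd : d ∣ J := ⟨e, h.symm⟩
  exact mul_left_cancel₀ hd (by rw [coDiv_spec hdvd, h])

lemma coDiv_ne_zero {J d : Ideal (𝓞 K)} (hJ : J ≠ 0) (h : d ∣ J) : coDiv J d ≠ 0 := by
  intro h0
  apply hJ
  rw [← coDiv_spec h, h0, mul_zero]

/-- Evaluation of the Ramanujan sum as a finite sum over divisors. -/
lemma ramanujanSum_eq_sum {J I : Ideal (𝓞 K)} (hJ : J ≠ 0) :
    ramanujanSum K J I = ∑ d ∈ idealDivisors J,
      if d ∣ I then (Ideal.absNorm d : ℤ) * idealMoebius K (coDiv J d) else 0 := by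
  classical
  rw [ramanujanSum]
  have hstep : ∀ d : Ideal (𝓞 K),
      (∑ᶠ (e : Ideal (𝓞 K)) (_ : d * e = J) (_ : d ∣ I),
        (Ideal.absNorm d : ℤ) * idealMoebius K e)
      = if d ∈ idealDivisors J then
          (if d ∣ I then (Ideal.absNorm d : ℤ) * idealMoebius K (coDiv J d) else 0) else 0 := by
    intro d
    by_cases hdJ : d ∣ J
    · have hd0 : d ≠ 0 := by
        rintro rfl
        exact hJ (zero_dvd_iff.mp hdJ)
      rw [if_pos ((mem_idealDivisors hJ).mpr hdJ)]
      have heq : ∀ e : Ideal (𝓞 K),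
          (∑ᶠ (_ : d * e = J) (_ : d ∣ I), (Ideal.absNorm d : ℤ) * idealMoebius K e)
          = if d * e = J then (if d ∣ I then (Ideal.absNorm d : ℤ) * idealMoebius K e else 0)
            else 0 := by
        intro e
        rw [show (∑ᶠ (_ : d * e = J) (_ : d ∣ I), (Ideal.absNorm d : ℤ) * idealMoebius K e)
          = ∑ᶠ (_ : d * e = J), if d ∣ I then (Ideal.absNorm d : ℤ) * idealMoebius K e else 0
          from finsum_congr fun _ => finsum_eq_if]
        exact finsum_eq_if
      rw [finsum_congr heq, finsum_eq_single _ (coDiv J d)]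
      · rw [if_pos (coDiv_spec hdJ)]
      · intro e hne
        rw [if_neg]
        intro habs
        exact hne (coDiv_eq hd0 habs).symm
    · rw [if_neg (fun hmem => hdJ ((mem_idealDivisors hJ).mp hmem))]
      have heq : ∀ e : Ideal (𝓞 K),
          (∑ᶠ (_ : d * e = J) (_ : d ∣ I), (Ideal.absNorm d : ℤ) * idealMoebius K e)
          = 0 := by
        intro e
        rw [show (∑ᶠ (_ : d * e = J) (_ : d ∣ I), (Ideal.absNorm d : ℤ) * idealMoebius K e)
          = ∑ᶠ (_ : d * e = J), if d ∣ I then (Ideal.absNorm d : ℤ) * idealMoebius K e else 0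
          from finsum_congr fun _ => finsum_eq_if]
        rw [finsum_eq_if, if_neg (fun habs => hdJ ⟨e, habs.symm⟩)]
      rw [finsum_congr heq, finsum_zero]
  rw [finsum_congr hstep]
  rw [finsum_eq_sum_of_support_subset _ (s := idealDivisors J) ?_]
  · exact Finset.sum_congr rfl (fun d hd => by rw [if_pos hd])
  · intro d hd
    simp only [Function.mem_support] at hd
    by_contra hmem
    exact hd (if_neg hmem)

/-- Evaluation of `sigmaK` as a finite sum over divisors. -/
lemma sigmaK_eq_sum {I : Ideal (𝓞 K)} (hI : I ≠ 0) (z : ℂ) :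
    sigmaK K z I = ∑ d ∈ idealDivisors I, (Ideal.absNorm d : ℂ) ^ z := by
  classical
  rw [sigmaK]
  have hstep : ∀ d : Ideal (𝓞 K),
      (∑ᶠ (_ : d ∣ I), (Ideal.absNorm d : ℂ) ^ z)
      = if d ∈ idealDivisors I then (Ideal.absNorm d : ℂ) ^ z else 0 := by
    intro d
    rw [finsum_eq_if]
    by_cases h : d ∣ I
    · rw [if_pos h, if_pos ((mem_idealDivisors hI).mpr h)]
    · rw [if_neg h, if_neg (fun hmem => h ((mem_idealDivisors hI).mp hmem))]
  rw [finsum_congr hstep]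
  rw [finsum_eq_sum_of_support_subset _ (s := idealDivisors I) ?_]
  · exact Finset.sum_congr rfl (fun d hd => by rw [if_pos hd])
  · intro d hd
    simp only [Function.mem_support] at hd
    by_contra hmem
    exact hd (if_neg hmem)

lemma absNorm_pos' {d : Ideal (𝓞 K)} (hd : d ≠ 0) : 0 < Ideal.absNorm d := by
  rw [Nat.pos_iff_ne_zero]
  intro h
  exact hd (Ideal.absNorm_eq_zero_iff.mp h)

lemma norm_cpow_eq {d : Ideal (𝓞 K)} (hd : d ≠ 0) (w : ℂ) :
    ‖(Ideal.absNorm d : ℂ) ^ w‖ = (Ideal.absNorm d : ℝ) ^ w.re :=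
  Complex.norm_natCast_cpow_of_pos (absNorm_pos' hd) w

/-- Summability of the comparison series `N(J)^{-Re s}`. -/
lemma summable_real_norm {Z : ℂ → ℂ} (hZ : IsDedekindZeta K Z) {s : ℂ} (hs : 1 < s.re) :
    Summable (fun J : {J : Ideal (𝓞 K) // J ≠ 0} => (Ideal.absNorm J.1 : ℝ) ^ (-s.re)) := by
  have h := (hZ.2 (s.re : ℂ) (by rwa [Complex.ofReal_re])).summable
  have heq : ∀ J : {J : Ideal (𝓞 K) // J ≠ 0},
      (Ideal.absNorm J.1 : ℂ) ^ (-(s.re : ℂ))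
      = (((Ideal.absNorm J.1 : ℝ) ^ (-s.re) : ℝ) : ℂ) := by
    intro J
    rw [← Complex.ofReal_natCast, ← Complex.ofReal_neg,
      ← Complex.ofReal_cpow (by positivity)]
  rw [funext heq] at h
  exact Complex.summable_ofReal.mp h

lemma norm_term_le {d : Ideal (𝓞 K)} (hd : d ≠ 0) (s : ℂ) :
    ‖(idealMoebius K d : ℂ) * (Ideal.absNorm d : ℂ) ^ (-s)‖
      ≤ (Ideal.absNorm d : ℝ) ^ (-s.re) := by
  rw [norm_mul, norm_cpow_eq hd, Complex.neg_re]
  have h1 : ‖(idealMoebius K d : ℂ)‖ ≤ 1 := by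
    rw [Complex.norm_intCast]
    exact_mod_cast abs_idealMoebius_le_one d
  have h2 : (0 : ℝ) ≤ (Ideal.absNorm d : ℝ) ^ (-s.re) := by positivity
  exact mul_le_of_le_one_left h2 h1

end Aux

set_option maxHeartbeats 1600000 in
set_option synthInstance.maxHeartbeats 400000 in
/-- **Dirichlet series of Ramanujan sums (Lemma 2.1).**
For `Re s > 1`: `∑_J C_J(I)/N(J)^s = σ_{K,1-s}(I)/ζ_K(s)`. -/
theorem dirichlet_series_ramanujan_sum
    (K : Type*) [Field K] [NumberField K] (Z : ℂ → ℂ) (hZ : IsDedekindZeta K Z)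
    (I : Ideal (𝓞 K)) (hI : I ≠ 0) (s : ℂ) (hs : 1 < s.re) :
    HasSum (fun J : {J : Ideal (𝓞 K) // J ≠ 0} =>
        (ramanujanSum K J.1 I : ℂ) / (Ideal.absNorm J.1 : ℂ) ^ s)
      (sigmaK K (1 - s) I / Z s) := by
  classical
  -- the Möbius Dirichlet series
  set g : {e : Ideal (𝓞 K) // e ≠ 0} → ℂ :=
    fun e => (idealMoebius K e.1 : ℂ) * (Ideal.absNorm e.1 : ℂ) ^ (-s) with hg_def
  have hg_norm : Summable (fun e : {e : Ideal (𝓞 K) // e ≠ 0} => ‖g e‖) :=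
    Summable.of_nonneg_of_le (fun e => norm_nonneg _)
      (fun e => norm_term_le e.2 s) (summable_real_norm hZ hs)
  have hg_sum : HasSum g (∑' e, g e) := hg_norm.of_norm.hasSum
  set M : ℂ := ∑' e, g e with hM_def
  -- the zeta series
  have hZs : HasSum (fun d : {d : Ideal (𝓞 K) // d ≠ 0} =>
      (Ideal.absNorm d.1 : ℂ) ^ (-s)) (Z s) := hZ.2 s hs
  have hZs_norm : Summable (fun d : {d : Ideal (𝓞 K) // d ≠ 0} =>
      ‖(Ideal.absNorm d.1 : ℂ) ^ (-s)‖) := by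
    have heq : ∀ d : {d : Ideal (𝓞 K) // d ≠ 0},
        ‖(Ideal.absNorm d.1 : ℂ) ^ (-s)‖ = (Ideal.absNorm d.1 : ℝ) ^ (-s.re) := fun d => by
      rw [norm_cpow_eq d.2, Complex.neg_re]
    rw [funext heq]
    exact summable_real_norm hZ hs
  -- `N` is multiplicative in the exponent
  have hmul_cpow : ∀ (a b : Ideal (𝓞 K)),
      (Ideal.absNorm a : ℂ) ^ (-s) * (Ideal.absNorm b : ℂ) ^ (-s)
        = (Ideal.absNorm (a * b) : ℂ) ^ (-s) := by
    intro a b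
    rw [map_mul Ideal.absNorm a b, Nat.cast_mul, Complex.natCast_mul_natCast_cpow]
  have hone : (1 : Ideal (𝓞 K)) ≠ 0 := by
    intro h
    have h1 : Ideal.absNorm (1 : Ideal (𝓞 K)) = 1 := map_one Ideal.absNorm
    rw [h, map_zero Ideal.absNorm] at h1
    simp at h1
  ---- Step 1 : M * Z s = 1
  have hMZ : M * Z s = 1 := by
    have hprod : HasSum
        (fun q : {e : Ideal (𝓞 K) // e ≠ 0} × {d : Ideal (𝓞 K) // d ≠ 0} =>
          g q.1 * (Ideal.absNorm q.2.1 : ℂ) ^ (-s)) (M * Z s) := by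
      apply HasSum.mul hg_sum hZs
      apply summable_mul_of_summable_norm hg_norm hZs_norm
    set π : {e : Ideal (𝓞 K) // e ≠ 0} × {d : Ideal (𝓞 K) // d ≠ 0} →
        {J : Ideal (𝓞 K) // J ≠ 0} :=
      fun q => ⟨q.1.1 * q.2.1, mul_ne_zero q.1.2 q.2.2⟩ with hπ_def
    have hsigma : HasSum (fun p : Σ J : {J : Ideal (𝓞 K) // J ≠ 0}, {q // π q = J} =>
        g p.2.1.1 * (Ideal.absNorm p.2.1.2.1 : ℂ) ^ (-s)) (M * Z s) :=
      (Equiv.sigmaFiberEquiv π).hasSum_iff.mpr hprod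
    have hfiber_fin : ∀ J : {J : Ideal (𝓞 K) // J ≠ 0}, Finite {q // π q = J} := by
      intro J
      haveI : Finite {e : Ideal (𝓞 K) // e ∣ J.1} :=
        @Finite.of_fintype _ (UniqueFactorizationMonoid.fintypeSubtypeDvd J.1 J.2)
      refine Finite.of_injective (fun q : {q // π q = J} =>
        (⟨q.1.1.1, ⟨q.1.2.1, (Subtype.ext_iff.mp q.2).symm⟩⟩ :
          {e : Ideal (𝓞 K) // e ∣ J.1})) ?_
      rintro ⟨⟨e, d⟩, hq⟩ ⟨⟨e', d'⟩, hq'⟩ h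
      simp only [Subtype.mk.injEq] at h
      have h1 : e.1 * d.1 = J.1 := Subtype.ext_iff.mp hq
      have h2 : e'.1 * d'.1 = J.1 := Subtype.ext_iff.mp hq'
      rw [← h] at h2
      have hdd : d = d' := Subtype.ext (mul_left_cancel₀ e.2 (h1.trans h2.symm))
      have hee' : e = e' := Subtype.ext h
      exact Subtype.ext (Prod.ext hee' hdd)
    have hfib : ∀ J : {J : Ideal (𝓞 K) // J ≠ 0},
        HasSum (fun q : {q // π q = J} =>
          g q.1.1 * (Ideal.absNorm q.1.2.1 : ℂ) ^ (-s))
          (if J.1 = 1 then 1 else 0) := by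
      intro J
      haveI := hfiber_fin J
      haveI : Fintype {q // π q = J} := Fintype.ofFinite _
      have h1 := hasSum_fintype (fun q : {q // π q = J} =>
        g q.1.1 * (Ideal.absNorm q.1.2.1 : ℂ) ^ (-s))
      have h2 : ∑ q : {q // π q = J}, g q.1.1 * (Ideal.absNorm q.1.2.1 : ℂ) ^ (-s)
          = if J.1 = 1 then 1 else 0 := by
        have hterm : ∀ q : {q // π q = J},
            g q.1.1 * (Ideal.absNorm q.1.2.1 : ℂ) ^ (-s)
            = (idealMoebius K q.1.1.1 : ℂ) * (Ideal.absNorm J.1 : ℂ) ^ (-s) := by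
          rintro ⟨⟨e, d⟩, hq⟩
          have hq' : e.1 * d.1 = J.1 := Subtype.ext_iff.mp hq
          simp only [hg_def]
          rw [mul_assoc, hmul_cpow e.1 d.1, hq']
        rw [Finset.sum_congr rfl (fun q _ => hterm q), ← Finset.sum_mul]
        have hbij : ∑ q : {q // π q = J}, (idealMoebius K q.1.1.1 : ℂ)
            = ∑ e ∈ idealDivisors J.1, (idealMoebius K e : ℂ) := by
          refine Finset.sum_bij' (fun q _ => q.1.1.1)
            (fun e he => ⟨(⟨e, ne_zero_of_mem_idealDivisors J.2 he⟩,
              ⟨coDiv J.1 e, coDiv_ne_zero J.2 ((mem_idealDivisors J.2).mp he)⟩),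
              Subtype.ext (coDiv_spec ((mem_idealDivisors J.2).mp he))⟩) ?_ ?_ ?_ ?_ ?_
          · rintro ⟨⟨e, d⟩, hq⟩ _
            have hq' : e.1 * d.1 = J.1 := Subtype.ext_iff.mp hq
            exact (mem_idealDivisors J.2).mpr ⟨d.1, hq'.symm⟩
          · intro e _
            exact Finset.mem_univ _
          · rintro ⟨⟨e, d⟩, hq⟩ _
            have hq' : e.1 * d.1 = J.1 := Subtype.ext_iff.mp hq
            exact Subtype.ext (Prod.ext (Subtype.ext rfl)
              (Subtype.ext (coDiv_eq e.2 hq')))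
          · intro e _
            rfl
          · intro q _
            rfl
        rw [hbij, show (∑ e ∈ idealDivisors J.1, (idealMoebius K e : ℂ))
            = ((∑ e ∈ idealDivisors J.1, idealMoebius K e : ℤ) : ℂ) by push_cast; rfl,
          sum_idealMoebius_divisors J.2]
        by_cases hJ1 : J.1 = 1
        · rw [if_pos hJ1, if_pos hJ1, hJ1]
          rw [map_one Ideal.absNorm, Nat.cast_one, Complex.one_cpow, Int.cast_one, one_mul]
        · rw [if_neg hJ1, if_neg hJ1, Int.cast_zero, zero_mul]
      rwa [h2] at h1
    have htotal : HasSum (fun J : {J : Ideal (𝓞 K) // J ≠ 0} =>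
        if J.1 = 1 then (1 : ℂ) else 0) (M * Z s) := hsigma.sigma hfib
    have hind : HasSum (fun J : {J : Ideal (𝓞 K) // J ≠ 0} =>
        if J.1 = 1 then (1 : ℂ) else 0) 1 := by
      have hfun : (fun J : {J : Ideal (𝓞 K) // J ≠ 0} => if J.1 = 1 then (1 : ℂ) else 0)
          = fun J => if J = ⟨1, hone⟩ then (1 : ℂ) else 0 := by
        funext J
        by_cases h : J.1 = 1
        · rw [if_pos h, if_pos (Subtype.ext h)]
        · rw [if_neg h, if_neg (fun hh => h (Subtype.ext_iff.mp hh))]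
      rw [hfun]
      exact hasSum_ite_eq _ _
    exact htotal.unique hind
  ---- Step 2 : the divisor-sum factor
  have hσ : HasSum (fun d : ↥(idealDivisors I) => (Ideal.absNorm d.1 : ℂ) ^ (1 - s))
      (sigmaK K (1 - s) I) := by
    have h1 := hasSum_fintype (fun d : ↥(idealDivisors I) =>
      (Ideal.absNorm d.1 : ℂ) ^ (1 - s))
    have h2 : (∑ d : ↥(idealDivisors I), (Ideal.absNorm d.1 : ℂ) ^ (1 - s))
        = ∑ d ∈ idealDivisors I, (Ideal.absNorm d : ℂ) ^ (1 - s) :=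
      Finset.sum_coe_sort (idealDivisors I) (fun d => (Ideal.absNorm d : ℂ) ^ (1 - s))
    rwa [h2, ← sigmaK_eq_sum hI (1 - s)] at h1
  have hσ_norm : Summable (fun d : ↥(idealDivisors I) =>
      ‖(Ideal.absNorm d.1 : ℂ) ^ (1 - s)‖) := Summable.of_finite
  ---- Step 3 : the full double series
  have hprod : HasSum
      (fun q : ↥(idealDivisors I) × {e : Ideal (𝓞 K) // e ≠ 0} =>
        (Ideal.absNorm q.1.1 : ℂ) ^ (1 - s) * g q.2) (sigmaK K (1 - s) I * M) := by
    apply HasSum.mul hσ hg_sum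
    apply summable_mul_of_summable_norm hσ_norm hg_norm
  have hd_ne : ∀ d : ↥(idealDivisors I), (d : Ideal (𝓞 K)) ≠ 0 :=
    fun d => ne_zero_of_mem_idealDivisors hI d.2
  set π : ↥(idealDivisors I) × {e : Ideal (𝓞 K) // e ≠ 0} → {J : Ideal (𝓞 K) // J ≠ 0} :=
    fun q => ⟨q.1.1 * q.2.1, mul_ne_zero (hd_ne q.1) q.2.2⟩ with hπ_def
  have hsigma : HasSum (fun p : Σ J : {J : Ideal (𝓞 K) // J ≠ 0}, {q // π q = J} =>
      (Ideal.absNorm p.2.1.1.1 : ℂ) ^ (1 - s) * g p.2.1.2) (sigmaK K (1 - s) I * M) :=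
    (Equiv.sigmaFiberEquiv π).hasSum_iff.mpr hprod
  have hfiber_fin : ∀ J : {J : Ideal (𝓞 K) // J ≠ 0}, Finite {q // π q = J} := by
    intro J
    haveI : Finite {e : Ideal (𝓞 K) // e ∣ J.1} :=
      @Finite.of_fintype _ (UniqueFactorizationMonoid.fintypeSubtypeDvd J.1 J.2)
    refine Finite.of_injective (fun q : {q // π q = J} =>
      (⟨q.1.1.1, ⟨q.1.2.1, (Subtype.ext_iff.mp q.2).symm⟩⟩ :
        {e : Ideal (𝓞 K) // e ∣ J.1})) ?_
    rintro ⟨⟨d, e⟩, hq⟩ ⟨⟨d', e'⟩, hq'⟩ h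
    simp only [Subtype.mk.injEq] at h
    have h1 : d.1 * e.1 = J.1 := Subtype.ext_iff.mp hq
    have h2 : d'.1 * e'.1 = J.1 := Subtype.ext_iff.mp hq'
    rw [← h] at h2
    have hee : e = e' := Subtype.ext (mul_left_cancel₀ (hd_ne d) (h1.trans h2.symm))
    have hdd' : d = d' := Subtype.ext h
    exact Subtype.ext (Prod.ext hdd' hee)
  have hfib : ∀ J : {J : Ideal (𝓞 K) // J ≠ 0},
      HasSum (fun q : {q // π q = J} =>
        (Ideal.absNorm q.1.1.1 : ℂ) ^ (1 - s) * g q.1.2)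
        ((ramanujanSum K J.1 I : ℂ) / (Ideal.absNorm J.1 : ℂ) ^ s) := by
    intro J
    haveI := hfiber_fin J
    haveI : Fintype {q // π q = J} := Fintype.ofFinite _
    have h1 := hasSum_fintype
      (fun q : {q // π q = J} => (Ideal.absNorm q.1.1.1 : ℂ) ^ (1 - s) * g q.1.2)
    have h2 : ∑ q : {q // π q = J}, (Ideal.absNorm q.1.1.1 : ℂ) ^ (1 - s) * g q.1.2
        = (ramanujanSum K J.1 I : ℂ) / (Ideal.absNorm J.1 : ℂ) ^ s := by
      have hterm : ∀ q : {q // π q = J},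
          (Ideal.absNorm q.1.1.1 : ℂ) ^ (1 - s) * g q.1.2
          = (((Ideal.absNorm q.1.1.1 : ℤ) * idealMoebius K q.1.2.1 : ℤ) : ℂ)
            * (Ideal.absNorm J.1 : ℂ) ^ (-s) := by
        rintro ⟨⟨d, e⟩, hq⟩
        have hq' : d.1 * e.1 = J.1 := Subtype.ext_iff.mp hq
        have hd0 : (d : Ideal (𝓞 K)) ≠ 0 := hd_ne d
        have hN0 : (Ideal.absNorm d.1 : ℂ) ≠ 0 := by
          simp only [Ne, Nat.cast_eq_zero, Ideal.absNorm_eq_zero_iff]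
          exact hd0
        simp only [hg_def]
        push_cast
        rw [sub_eq_add_neg, Complex.cpow_add _ _ hN0, Complex.cpow_one]
        rw [show (Ideal.absNorm d.1 : ℂ) * (Ideal.absNorm d.1 : ℂ) ^ (-s) *
            ((idealMoebius K e.1 : ℂ) * (Ideal.absNorm e.1 : ℂ) ^ (-s))
          = (Ideal.absNorm d.1 : ℂ) * (idealMoebius K e.1 : ℂ) *
            ((Ideal.absNorm d.1 : ℂ) ^ (-s) * (Ideal.absNorm e.1 : ℂ) ^ (-s)) by ring]
        rw [hmul_cpow d.1 e.1, hq']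
      rw [Finset.sum_congr rfl (fun q _ => hterm q), ← Finset.sum_mul]
      have hbij : ∑ q : {q // π q = J},
          (((Ideal.absNorm q.1.1.1 : ℤ) * idealMoebius K q.1.2.1 : ℤ) : ℂ)
          = (ramanujanSum K J.1 I : ℂ) := by
        rw [ramanujanSum_eq_sum J.2 (I := I)]
        rw [show ((∑ d ∈ idealDivisors J.1, if d ∣ I then
              (Ideal.absNorm d : ℤ) * idealMoebius K (coDiv J.1 d) else 0 : ℤ) : ℂ)
          = ∑ d ∈ (idealDivisors J.1).filter (fun d => d ∣ I),
              (((Ideal.absNorm d : ℤ) * idealMoebius K (coDiv J.1 d) : ℤ) : ℂ) by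
          rw [Finset.sum_filter]
          push_cast
          exact Finset.sum_congr rfl (fun d _ => by split_ifs <;> simp)]
        refine Finset.sum_bij' (fun q _ => q.1.1.1)
          (fun d hd => ?_) ?_ ?_ ?_ ?_ ?_
        · -- the inverse map
          rw [Finset.mem_filter] at hd
          have hdJ : d ∣ J.1 := (mem_idealDivisors J.2).mp hd.1
          have hdI : d ∈ idealDivisors I := (mem_idealDivisors hI).mpr hd.2
          exact ⟨(⟨d, hdI⟩, ⟨coDiv J.1 d, coDiv_ne_zero J.2 hdJ⟩),
            Subtype.ext (coDiv_spec hdJ)⟩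
        · -- forward membership
          rintro ⟨⟨d, e⟩, hq⟩ _
          have hq' : d.1 * e.1 = J.1 := Subtype.ext_iff.mp hq
          rw [Finset.mem_filter, mem_idealDivisors J.2]
          exact ⟨⟨e.1, hq'.symm⟩, (mem_idealDivisors hI).mp d.2⟩
        · intro d _
          exact Finset.mem_univ _
        · -- left inverse
          rintro ⟨⟨d, e⟩, hq⟩ _
          have hq' : d.1 * e.1 = J.1 := Subtype.ext_iff.mp hq
          exact Subtype.ext (Prod.ext (Subtype.ext rfl)
            (Subtype.ext (coDiv_eq (hd_ne d) hq')))
        · intro d _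
          rfl
        · intro q _
          have hq' : q.1.1.1 * q.1.2.1 = J.1 := Subtype.ext_iff.mp q.2
          have hco : coDiv J.1 q.1.1.1 = q.1.2.1 := coDiv_eq (hd_ne q.1.1) hq'
          simp only [hco]
      rw [hbij, Complex.cpow_neg, div_eq_mul_inv]
    rwa [h2] at h1
  have htotal : HasSum (fun J : {J : Ideal (𝓞 K) // J ≠ 0} =>
      (ramanujanSum K J.1 I : ℂ) / (Ideal.absNorm J.1 : ℂ) ^ s)
      (sigmaK K (1 - s) I * M) := hsigma.sigma hfib
  have hM_eq : M = (Z s)⁻¹ := eq_inv_of_mul_eq_one_left hMZ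
  rwa [hM_eq, ← div_eq_mul_inv] at htotal

end
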